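/- arXiv:1509.03986 — 3 statements merged into one kernel-verified Lean document; each statement's English description precedes it below -/
import Mathlib

section
/- As T → ∞, the first eigenvalue of the operator -d²/dτ² on (0,T) with boundary conditions u'(0) = -u(0) and u(T) = 0 satisfies λ₁(T) = -1 + 4(1+o(1))·e^{-2T}, and the second eigenvalue satisfies λ₂(T) ≥ 0. -/
open MeasureTheory Real Set

/-- `lam` is an eigenvalue of `-d²/dτ²` on `(0,T)` with boundary conditions
`u'(0) = -u(0)` and `u(T) = 0`. -/
def IsRobinDirichletEigenvalue (T lam : ℝ) : Prop :=
  ∃ u : ℝ → ℝ, ContDiff ℝ 2 u ∧ (∃ τ ∈ Icc (0:ℝ) T, u τ ≠ 0) ∧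
    deriv u 0 = - u 0 ∧ u T = 0 ∧
    ∀ τ ∈ Icc (0:ℝ) T, - deriv (deriv u) τ = lam * u τ

/-!
A negative eigenvalue `-κ²` (`κ > 0`) has an eigenfunction proportional to
`(κ - 1) e^{κτ} + (κ + 1) e^{-κτ}`, so it occurs exactly when `(1 - κ) e^{2κT} = 1 + κ`
(i.e. `tanh (κT) = κ`). Taking logarithms, a root `κ ∈ (0,1)` is a zero of the strictly convex
function `log (1 + x) - log (1 - x) - 2Tx` on `[0,1)`, which also vanishes at `0`; hence there is
at most one such root, and for `T ≥ 2` the intermediate value theorem places it in `(1/2, 1)`.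
So `λ₁ = -κ²` is the only negative eigenvalue, forcing `λ₂ ≥ 0`. Finally the equation gives
`1 - κ² = (1 + κ)² e^{-2κT}` with `0 ≤ 1 - κ ≤ 2e^{-T}`, so `(1 - κ)T → 0` and
`(λ₁ + 1) e^{2T} / 4 = ((1 + κ)/2)² e^{2(1-κ)T} → 1`.
-/

open Filter Topology

/-- For `κ ≠ 0` this is the condition for `-κ²` to be an eigenvalue; it reads `tanh (κT) = κ`. -/
def IsCharacteristicRoot (T κ : ℝ) : Prop :=
  (1 - κ) * exp (2 * κ * T) = 1 + κ

theorem IsCharacteristicRoot.one_sub_eq {T κ : ℝ} (hroot : IsCharacteristicRoot T κ) :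
    1 - κ = (1 + κ) * exp (-(2 * κ * T)) := by
  unfold IsCharacteristicRoot at hroot
  have hexp : exp (2 * κ * T) * exp (-(2 * κ * T)) = 1 := by rw [← exp_add]; simp
  linear_combination exp (-(2 * κ * T)) * hroot - (1 - κ) * hexp

theorem IsCharacteristicRoot.lt_one {T κ : ℝ} (hroot : IsCharacteristicRoot T κ) (hκ : -1 < κ) :
    κ < 1 := by
  have hpos : 0 < (1 + κ) * exp (-(2 * κ * T)) := mul_pos (by linarith) (exp_pos _)
  linarith [hroot.one_sub_eq]

theorem IsCharacteristicRoot.one_sub_mem_Icc {T κ : ℝ} (hroot : IsCharacteristicRoot T κ)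
    (hT : 0 ≤ T) (hκ : 1 / 2 ≤ κ) : 1 - κ ∈ Icc 0 (2 * exp (-T)) := by
  have hκ1 := hroot.lt_one (by linarith)
  refine ⟨sub_nonneg.2 hκ1.le, hroot.one_sub_eq ▸
    mul_le_mul (by linarith) (exp_le_exp.2 (by nlinarith)) (exp_pos _).le zero_le_two⟩

theorem eq_mul_exp_of_hasDerivAt_eq_mul {f : ℝ → ℝ} {c a b : ℝ}
    (hf : ∀ x ∈ Icc a b, HasDerivAt f (c * f x) x) :
    ∀ x ∈ Icc a b, f x = f a * exp (c * (x - a)) := by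
  set g : ℝ → ℝ := fun x => f x * exp (-(c * (x - a)))
  have hg : ∀ x ∈ Icc a b, HasDerivAt g 0 x := fun x hx => by
    have he : HasDerivAt (fun x => exp (-(c * (x - a)))) (exp (-(c * (x - a))) * -c) x := by
      simpa using (((hasDerivAt_id x).sub_const a).const_mul c).neg.exp
    exact ((hf x hx).mul he).congr_deriv (by ring)
  have hconst := constant_of_has_deriv_right_zero
    (fun x hx => (hg x hx).continuousAt.continuousWithinAt)
    (fun x hx => (hg x (Ico_subset_Icc_self hx)).hasDerivWithinAt)
  intro x hx
  have := hconst x hx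
  simp only [g, sub_self, mul_zero, neg_zero, exp_zero, mul_one] at this
  rw [← this, mul_assoc, ← exp_add, neg_add_cancel, exp_zero, mul_one]

theorem two_mul_mul_eq_of_deriv_deriv_eq_sq_mul {u : ℝ → ℝ} {κ a b : ℝ} (hu : ContDiff ℝ 2 u)
    (h : ∀ x ∈ Icc a b, deriv (deriv u) x = κ ^ 2 * u x) :
    ∀ x ∈ Icc a b, 2 * κ * u x = (deriv u a + κ * u a) * exp (κ * (x - a))
      - (deriv u a - κ * u a) * exp (-κ * (x - a)) := by
  have hu1 : ∀ x, HasDerivAt u (deriv u x) x := fun x =>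
    ((hu.differentiable (by norm_num)) x).hasDerivAt
  have hu2 : ∀ x, HasDerivAt (deriv u) (deriv (deriv u) x) x := fun x =>
    ((hu.iterate_deriv' 1 1).differentiable (by norm_num) x).hasDerivAt
  have hplus := eq_mul_exp_of_hasDerivAt_eq_mul (f := fun x => deriv u x + κ * u x) (c := κ)
    fun x hx => ((hu2 x).add ((hu1 x).const_mul κ)).congr_deriv (by rw [h x hx]; ring)
  have hminus := eq_mul_exp_of_hasDerivAt_eq_mul (f := fun x => deriv u x - κ * u x) (c := -κ)
    fun x hx => ((hu2 x).sub ((hu1 x).const_mul κ)).congr_deriv (by rw [h x hx]; ring)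
  intro x hx
  linear_combination hplus x hx - hminus x hx

theorem IsRobinDirichletEigenvalue.isCharacteristicRoot_of_neg_sq {T κ : ℝ}
    (h : IsRobinDirichletEigenvalue T (-κ ^ 2)) (hκ : κ ≠ 0) : IsCharacteristicRoot T κ := by
  obtain ⟨u, hu, ⟨τ, hτ, huτ⟩, hrobin, huT, hode⟩ := h
  have hsol := two_mul_mul_eq_of_deriv_deriv_eq_sq_mul (κ := κ) (a := 0) hu fun x hx => by
    linarith [hode x hx]
  simp only [hrobin, sub_zero] at hsol
  have hu0 : u 0 ≠ 0 := fun h0 => huτ <| by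
    have := hsol τ hτ
    simp only [h0, mul_zero, add_zero, neg_zero, zero_mul, sub_zero] at this
    exact (mul_eq_zero.1 this).resolve_left (mul_ne_zero two_ne_zero hκ)
  have hT := hsol T (right_mem_Icc.2 (hτ.1.trans hτ.2))
  rw [huT, mul_zero] at hT
  have hexp : exp (κ * T) * exp (-κ * T) = 1 := by rw [← exp_add]; simp
  have : u 0 * ((1 - κ) * exp (2 * κ * T) - (1 + κ)) = 0 := by
    rw [show 2 * κ * T = κ * T + κ * T by ring, exp_add]
    linear_combination exp (κ * T) * hT + (1 + κ) * u 0 * hexp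
  exact sub_eq_zero.1 ((mul_eq_zero.1 this).resolve_left hu0)

theorem isRobinDirichletEigenvalue_neg_sq_of_isCharacteristicRoot {T κ : ℝ} (hT : 0 ≤ T)
    (hκ : κ ≠ 0) (hroot : IsCharacteristicRoot T κ) : IsRobinDirichletEigenvalue T (-κ ^ 2) := by
  set u : ℝ → ℝ := fun x => (κ - 1) * exp (κ * x) + (κ + 1) * exp (-(κ * x))
  have hexp : ∀ x, HasDerivAt (fun x => exp (κ * x)) (κ * exp (κ * x)) x := fun x => by
    simpa [mul_comm] using ((hasDerivAt_id x).const_mul κ).exp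
  have hexp' : ∀ x, HasDerivAt (fun x => exp (-(κ * x))) (-κ * exp (-(κ * x))) x := fun x => by
    simpa [mul_comm] using ((hasDerivAt_id x).const_mul κ).neg.exp
  have hu' : deriv u = fun x => κ * ((κ - 1) * exp (κ * x) - (κ + 1) * exp (-(κ * x))) :=
    funext fun x => (((hexp x).const_mul _).add ((hexp' x).const_mul _)).deriv.trans (by ring)
  have hu'' : deriv (deriv u) = fun x => κ ^ 2 * u x := by
    rw [hu']
    exact funext fun x => ((((hexp x).const_mul (κ - 1)).sub
      ((hexp' x).const_mul (κ + 1))).const_mul κ).deriv.trans (by simp only [u]; ring)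
  refine ⟨u, by fun_prop, ⟨0, left_mem_Icc.2 hT, by simpa [u] using hκ⟩, ?_, ?_, ?_⟩
  · simp only [hu', u, mul_zero, neg_zero, exp_zero]
    ring
  · have hexp : exp (κ * T) * exp (-(κ * T)) = 1 := by rw [← exp_add]; simp
    rw [IsCharacteristicRoot, show 2 * κ * T = κ * T + κ * T by ring, exp_add] at hroot
    linear_combination (-exp (-(κ * T))) * hroot + (1 - κ) * exp (κ * T) * hexp
  · intro x _
    rw [hu'']
    ring

theorem strictConvexOn_log_one_add_sub_log_one_sub (c : ℝ) :
    StrictConvexOn ℝ (Ico 0 1) fun x => log (1 + x) - log (1 - x) - c * x := by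
  have hderiv : ∀ x ∈ Ioo (0 : ℝ) 1,
      deriv (fun x => log (1 + x) - log (1 - x) - c * x) x = 2 / (1 - x ^ 2) - c := by
    intro x hx
    have h1 := ((hasDerivAt_id x).const_add 1).log (by simp; linarith [hx.1])
    have h2 := ((hasDerivAt_id x).const_sub 1).log (by simp; linarith [hx.2])
    refine ((h1.sub h2).sub ((hasDerivAt_id x).const_mul c)).deriv.trans ?_
    have : 1 - x ≠ 0 := by linarith [hx.2]
    have : 1 + x ≠ 0 := by linarith [hx.1]
    have : 1 - x ^ 2 ≠ 0 := by nlinarith [hx.1, hx.2]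
    simp only [id_eq]
    field_simp
    ring
  refine StrictMonoOn.strictConvexOn_of_deriv (convex_Ico 0 1) ?_ ?_
  · exact ContinuousOn.sub (ContinuousOn.sub
      (ContinuousOn.log (by fun_prop) fun x hx => by linarith [hx.1])
      (ContinuousOn.log (by fun_prop) fun x hx => by linarith [hx.2])) (by fun_prop)
  · rw [interior_Ico]
    intro x hx y hy hxy
    rw [hderiv x hx, hderiv y hy, sub_lt_sub_iff_right]
    apply div_lt_div_of_pos_left two_pos (by nlinarith [hy.2, hy.1])
    nlinarith [hx.1]

theorem IsCharacteristicRoot.eq_of_mem_Ioo {T a b : ℝ} (hra : IsCharacteristicRoot T a)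
    (hrb : IsCharacteristicRoot T b) (ha : a ∈ Ioo 0 1) (hb : b ∈ Ioo 0 1) : a = b := by
  set f : ℝ → ℝ := fun x => log (1 + x) - log (1 - x) - 2 * T * x
  have hzero : ∀ x ∈ Ioo (0 : ℝ) 1, IsCharacteristicRoot T x → f x = 0 := by
    intro x hx hroot
    have := congrArg log hroot
    rw [log_mul (by linarith [hx.2]) (exp_ne_zero _), log_exp] at this
    simp only [f]
    linarith
  have hnot_lt : ∀ x ∈ Ioo (0 : ℝ) 1, ∀ y ∈ Ioo (0 : ℝ) 1,
      IsCharacteristicRoot T x → IsCharacteristicRoot T y → ¬ x < y := by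
    intro x hx y hy hrx hry hxy
    have hf : StrictConvexOn ℝ (Ico 0 1) f := strictConvexOn_log_one_add_sub_log_one_sub (2 * T)
    have := hf.lt_on_openSegment
      (left_mem_Ico.2 one_pos) ⟨hy.1.le, hy.2⟩ hy.1.ne
      (by rw [openSegment_eq_Ioo hy.1]; exact ⟨hx.1, hxy⟩)
    have hf0 : f 0 = 0 := by simp [f]
    rw [hzero x hx hrx, hf0, hzero y hy hry, max_self] at this
    exact this.false
  exact le_antisymm (not_lt.1 (hnot_lt b hb a ha hrb hra)) (not_lt.1 (hnot_lt a ha b hb hra hrb))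

theorem IsRobinDirichletEigenvalue.exists_isCharacteristicRoot_of_neg {T lam : ℝ}
    (h : IsRobinDirichletEigenvalue T lam) (hlam : lam < 0) :
    ∃ κ ∈ Ioo (0 : ℝ) 1, IsCharacteristicRoot T κ ∧ lam = -κ ^ 2 := by
  have hκ : 0 < √(-lam) := sqrt_pos.2 (neg_pos.2 hlam)
  have hlam' : lam = -√(-lam) ^ 2 := by rw [sq_sqrt (by linarith), neg_neg]
  have hroot := (hlam' ▸ h).isCharacteristicRoot_of_neg_sq hκ.ne'
  exact ⟨√(-lam), ⟨hκ, hroot.lt_one (by linarith)⟩, hroot, hlam'⟩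

theorem IsRobinDirichletEigenvalue.eq_of_neg {T a b : ℝ} (ha : IsRobinDirichletEigenvalue T a)
    (hb : IsRobinDirichletEigenvalue T b) (ha0 : a < 0) (hb0 : b < 0) : a = b := by
  obtain ⟨κ, hκ, hκroot, rfl⟩ := ha.exists_isCharacteristicRoot_of_neg ha0
  obtain ⟨μ, hμ, hμroot, rfl⟩ := hb.exists_isCharacteristicRoot_of_neg hb0
  rw [hκroot.eq_of_mem_Ioo hμroot hκ hμ]

theorem exists_isCharacteristicRoot_mem_Ioo {T : ℝ} (hT : 2 ≤ T) :
    ∃ κ ∈ Ioo (1 / 2 : ℝ) 1, IsCharacteristicRoot T κ := by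
  have hcont : ContinuousOn (fun x => (1 - x) * exp (2 * x * T) - (1 + x)) (Icc (1 / 2) 1) := by
    fun_prop
  have hhalf : 0 < (1 - 1 / 2) * exp (2 * (1 / 2) * T) - (1 + 1 / 2) := by
    rw [show 2 * (1 / 2 : ℝ) * T = T by ring]
    linarith [add_one_lt_exp (show T ≠ 0 by linarith)]
  obtain ⟨κ, hκ, hroot⟩ := intermediate_value_Ioo' (by norm_num) hcont ⟨by norm_num, hhalf⟩
  exact ⟨κ, hκ, sub_eq_zero.1 hroot⟩

theorem eq_neg_sq_of_isLeast {T l : ℝ} (hT : 2 ≤ T)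
    (hl : IsLeast {lam | IsRobinDirichletEigenvalue T lam} l) :
    ∃ κ ∈ Ioo (1 / 2 : ℝ) 1, IsCharacteristicRoot T κ ∧ l = -κ ^ 2 := by
  obtain ⟨κ, hκ, hroot⟩ := exists_isCharacteristicRoot_mem_Ioo hT
  have hκpos : 0 < κ := by linarith [hκ.1]
  have heig :=
    isRobinDirichletEigenvalue_neg_sq_of_isCharacteristicRoot (by linarith) hκpos.ne' hroot
  have hneg : -κ ^ 2 < 0 := by nlinarith
  exact ⟨κ, hκ, hroot, hl.1.eq_of_neg heig ((hl.2 heig).trans_lt hneg) hneg⟩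

theorem tendsto_one_sub_sq_mul_exp_of_isCharacteristicRoot {κ : ℝ → ℝ}
    (h : ∀ᶠ T in atTop, 1 / 2 ≤ κ T ∧ IsCharacteristicRoot T (κ T)) :
    Tendsto (fun T => (1 - κ T ^ 2) * exp (2 * T) / 4) atTop (𝓝 1) := by
  have hbound : ∀ᶠ T in atTop, 0 ≤ T ∧ 1 - κ T ∈ Icc 0 (2 * exp (-T)) :=
    (h.and (eventually_ge_atTop 0)).mono fun T ⟨⟨hκ, hroot⟩, hT⟩ =>
      ⟨hT, hroot.one_sub_mem_Icc hT hκ⟩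
  have hgap : Tendsto (fun T => 1 - κ T) atTop (𝓝 0) := by
    refine squeeze_zero' (hbound.mono fun T hT => hT.2.1) (hbound.mono fun T hT => hT.2.2) ?_
    simpa using tendsto_exp_neg_atTop_nhds_zero.const_mul 2
  have hgapT : Tendsto (fun T => (1 - κ T) * T) atTop (𝓝 0) := by
    refine squeeze_zero' (g := fun T => 2 * (T ^ 1 * exp (-T)))
      (hbound.mono fun T hT => mul_nonneg hT.2.1 hT.1) (hbound.mono fun T hT => ?_) ?_
    · calc (1 - κ T) * T ≤ 2 * exp (-T) * T := mul_le_mul_of_nonneg_right hT.2.2 hT.1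
        _ = 2 * (T ^ 1 * exp (-T)) := by ring
    · simpa using (tendsto_pow_mul_exp_neg_atTop_nhds_zero 1).const_mul 2
  have hlim : Tendsto (fun T => ((2 - (1 - κ T)) / 2) ^ 2 * exp (2 * ((1 - κ T) * T))) atTop
      (𝓝 1) := by
    simpa using (((hgap.const_sub 2).div_const 2).pow 2).mul (hgapT.const_mul 2).rexp
  refine hlim.congr' (h.mono fun T ⟨_, hroot⟩ => ?_)
  have hexp : exp (-(2 * κ T * T)) * exp (2 * T) = exp (2 * ((1 - κ T) * T)) := by
    rw [← exp_add]; ring_nf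
  rw [← hexp]
  linear_combination (-(1 + κ T) * exp (2 * T) / 4) * hroot.one_sub_eq

theorem stmt3 (lam1 lam2 : ℝ → ℝ)
    (h1 : ∀ T ≥ (1:ℝ), IsRobinDirichletEigenvalue T (lam1 T) ∧
      ∀ lam, IsRobinDirichletEigenvalue T lam → lam1 T ≤ lam)
    (h2 : ∀ T ≥ (1:ℝ), IsRobinDirichletEigenvalue T (lam2 T) ∧ lam1 T < lam2 T ∧
      ∀ lam, IsRobinDirichletEigenvalue T lam → lam1 T < lam → lam2 T ≤ lam) :
    (∃ ε : ℝ → ℝ, Filter.Tendsto ε Filter.atTop (nhds 0) ∧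
      ∀ᶠ T in Filter.atTop, lam1 T = -1 + 4 * (1 + ε T) * Real.exp (-2*T)) ∧
    (∀ᶠ T in Filter.atTop, 0 ≤ lam2 T) := by
  have hlam1 : ∀ T, 2 ≤ T → ∃ κ ∈ Ioo (1 / 2 : ℝ) 1,
      IsCharacteristicRoot T κ ∧ lam1 T = -κ ^ 2 := fun T hT =>
    eq_neg_sq_of_isLeast hT ⟨(h1 T (by linarith)).1, fun lam => (h1 T (by linarith)).2 lam⟩
  choose! κ hκ hroot hlam using hlam1
  have hev := eventually_ge_atTop (2 : ℝ)
  refine ⟨⟨fun T => (lam1 T + 1) * exp (2 * T) / 4 - 1, ?_, .of_forall fun T => ?_⟩, ?_⟩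
  · have := (tendsto_one_sub_sq_mul_exp_of_isCharacteristicRoot (hev.mono fun T hT =>
      ⟨(hκ T hT).1.le, hroot T hT⟩)).sub_const 1
    rw [sub_self] at this
    exact this.congr' (hev.mono fun T hT => by simp only [hlam T hT]; ring)
  · have hexp : exp (2 * T) * exp (-2 * T) = 1 := by rw [← exp_add]; simp
    linear_combination (-(lam1 T + 1)) * hexp
  · filter_upwards [hev] with T hT
    obtain ⟨he2, hlt, -⟩ := h2 T (by linarith)
    have hneg1 : lam1 T < 0 := by rw [hlam T hT]; nlinarith [(hκ T hT).1]
    by_contra! hneg2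
    exact hlt.ne ((h1 T (by linarith)).1.eq_of_neg he2 hneg1 hneg2)
end

section
/- For T large, the transcendental equation tanh(μT) = μ has a unique solution μ(T) ∈ (0,1), and μ(T) = 1 - 2e^{-2T} + o(e^{-2T}) as T → ∞; consequently -μ(T)² = -1 + 4e^{-2T} + o(e^{-2T}). -/
/-!
With `tanh x = 1 - 2 / (e^{2x} + 1)`, the inequality `x / (1 + x) < tanh x` (equivalent to
`2x + 1 < e^{2x}`) shows that `tanh (μT) - μ` changes sign on `[1 - 1/T, 1]` and that every
positive root has `μT > T - 1`. The root is unique because it satisfies `tanh (μT) / (μT) = 1/T`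
and `tanh x / x` is strictly decreasing.

For the asymptotics, `1 - μ = 2 / (e^{2μT} + 1) = 2e^{-2T} / (e^{-2(1-μ)T} + e^{-2T})`, and
`(1 - μ)T ≤ 2e² T e^{-2T} → 0`, so `1 - μ ~ 2e^{-2T}`; multiplying by `1 + μ → 2` gives
`1 - μ² ~ 4e^{-2T}`.
-/

open Real Set Asymptotics Filter
open scoped Topology

namespace Real

theorem tanh_eq_one_sub (x : ℝ) : tanh x = 1 - 2 / (exp (2 * x) + 1) := by
  rw [tanh_eq, exp_neg, show 2 * x = x + x by ring, exp_add]
  have := exp_pos x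
  field_simp
  ring

theorem hasDerivAt_tanh (x : ℝ) : HasDerivAt tanh (cosh x ^ 2)⁻¹ x := by
  have h := (hasDerivAt_sinh x).div (hasDerivAt_cosh x) (cosh_pos x).ne'
  rw [show cosh x * cosh x - sinh x * sinh x = 1 by nlinarith [cosh_sq x], one_div] at h
  rwa [show tanh = sinh / cosh from funext tanh_eq_sinh_div_cosh]

@[fun_prop]
theorem continuous_tanh : Continuous tanh :=
  continuous_iff_continuousAt.2 fun x => (hasDerivAt_tanh x).continuousAt

theorem div_one_add_lt_tanh {x : ℝ} (hx : 0 < x) : x / (1 + x) < tanh x := by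
  have h := add_one_lt_exp (mul_pos two_pos hx).ne'
  rw [tanh_eq_one_sub, div_lt_iff₀ (by positivity), sub_mul, one_mul,
    div_mul_eq_mul_div, lt_sub_iff_add_lt, ← lt_sub_iff_add_lt', div_lt_iff₀ (by positivity)]
  nlinarith

theorem strictAntiOn_tanh_div_self : StrictAntiOn (fun x => tanh x / x) (Ioi 0) := by
  refine strictAntiOn_of_deriv_neg (convex_Ioi 0)
    (continuous_tanh.continuousOn.div continuousOn_id fun x hx => (ne_of_gt hx)) fun x hx => ?_
  rw [interior_Ioi, mem_Ioi] at hx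
  rw [((hasDerivAt_tanh x).fun_div (hasDerivAt_id' x) hx.ne').deriv]
  have hsinh : 2 * x < 2 * sinh x * cosh x := sinh_two_mul x ▸ self_lt_sinh_iff.2 (by linarith)
  have hc := cosh_pos x
  rw [tanh_eq_sinh_div_cosh]
  apply div_neg_of_neg_of_pos _ (by positivity)
  rw [mul_one, sub_neg, ← div_eq_inv_mul, div_lt_div_iff₀ (by positivity) hc]
  nlinarith

end Real

theorem exists_tanh_mul_eq_self {T : ℝ} (hT : 1 < T) :
    ∃ μ ∈ Ioo (1 - T⁻¹) 1, tanh (μ * T) = μ := by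
  have hT0 : 0 < T := by linarith
  have hf : ContinuousOn (fun μ => tanh (μ * T) - μ) (Icc (1 - T⁻¹) 1) := by fun_prop
  have hleft : 0 < tanh ((1 - T⁻¹) * T) - (1 - T⁻¹) := by
    have h := div_one_add_lt_tanh (sub_pos.2 hT)
    rw [add_sub_cancel, sub_div, div_self hT0.ne', one_div] at h
    rwa [sub_mul, one_mul, inv_mul_cancel₀ hT0.ne', sub_pos]
  have hright : tanh (1 * T) - 1 < 0 := sub_neg.2 (tanh_lt_one _)
  obtain ⟨μ, hμ, hμT⟩ := intermediate_value_Ioo' (by simp [hT0.le]) hf ⟨hright, hleft⟩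
  exact ⟨μ, hμ, sub_eq_zero.1 hμT⟩

theorem eq_of_tanh_mul_eq_self {T μ ν : ℝ} (hT : 0 < T) (hμ : 0 < μ) (hν : 0 < ν)
    (hμT : tanh (μ * T) = μ) (hνT : tanh (ν * T) = ν) : μ = ν := by
  have slope_eq : ∀ x, 0 < x → tanh (x * T) = x → tanh (x * T) / (x * T) = T⁻¹ :=
    fun x hx h => by rw [h, div_mul_cancel_left₀ hx.ne']
  refine mul_right_cancel₀ hT.ne' (strictAntiOn_tanh_div_self.injOn (mul_pos hμ hT)
    (mul_pos hν hT) ?_)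
  exact (slope_eq μ hμ hμT).trans (slope_eq ν hν hνT).symm

theorem existsUnique_tanh_mul_eq_self {T : ℝ} (hT : 1 < T) :
    ∃! μ : ℝ, μ ∈ Ioo (0 : ℝ) 1 ∧ tanh (μ * T) = μ := by
  obtain ⟨μ, ⟨hμ, hμ1⟩, hμT⟩ := exists_tanh_mul_eq_self hT
  have hμ0 : 0 < μ := lt_trans (sub_pos.2 (inv_lt_one_of_one_lt₀ hT)) hμ
  exact ⟨μ, ⟨⟨hμ0, hμ1⟩, hμT⟩, fun ν ⟨⟨hν0, _⟩, hνT⟩ =>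
    eq_of_tanh_mul_eq_self (by linarith) hν0 hμ0 hνT hμT⟩

theorem sub_one_lt_mul_of_tanh_mul_eq_self {T μ : ℝ} (hT : 0 < T) (hμ : 0 < μ)
    (h : tanh (μ * T) = μ) : T - 1 < μ * T := by
  have hlt := div_one_add_lt_tanh (mul_pos hμ hT)
  rw [h, div_lt_iff₀ (by positivity)] at hlt
  nlinarith

theorem one_sub_le_of_tanh_mul_eq_self {T μ : ℝ} (hT : 0 < T) (hμ : 0 < μ)
    (h : tanh (μ * T) = μ) : 1 - μ ≤ 2 * exp 2 * exp (-2 * T) := by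
  have hlow := sub_one_lt_mul_of_tanh_mul_eq_self hT hμ h
  have hexp : 1 ≤ exp 2 * exp (-2 * T) * exp (2 * (μ * T)) := by
    rw [← exp_add, ← exp_add]
    exact one_le_exp (by linarith)
  rw [← h, tanh_eq_one_sub, sub_sub_cancel, div_le_iff₀ (by positivity)]
  nlinarith [exp_pos 2, exp_pos (-2 * T)]

theorem tendsto_one_sub_mul_of_tanh_mul_eq_self {μ : ℝ → ℝ}
    (hμ : ∀ᶠ T in atTop, 0 < μ T ∧ tanh (μ T * T) = μ T) :
    Tendsto (fun T => (1 - μ T) * T) atTop (𝓝 0) := by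
  have hbound : Tendsto (fun T => 2 * exp 2 * (T * exp (-2 * T))) atTop (𝓝 0) := by
    simpa using (tendsto_rpow_mul_exp_neg_mul_atTop_nhds_zero 1 2 two_pos).const_mul (2 * exp 2)
  refine tendsto_of_tendsto_of_tendsto_of_le_of_le' tendsto_const_nhds hbound ?_ ?_
  · filter_upwards [hμ, eventually_gt_atTop 0] with T ⟨_, hfix⟩ hT0
    exact mul_nonneg (sub_nonneg.2 (hfix ▸ tanh_lt_one _).le) hT0.le
  · filter_upwards [hμ, eventually_gt_atTop 0] with T ⟨hμ0, hfix⟩ hT0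
    exact le_of_le_of_eq
      (mul_le_mul_of_nonneg_right (one_sub_le_of_tanh_mul_eq_self hT0 hμ0 hfix) hT0.le) (by ring)

theorem isEquivalent_one_sub_of_tanh_mul_eq_self {μ : ℝ → ℝ}
    (hμ : ∀ᶠ T in atTop, 0 < μ T ∧ tanh (μ T * T) = μ T) :
    (fun T => 1 - μ T) ~[atTop] fun T => 2 * exp (-2 * T) := by
  have hE : Tendsto (fun T : ℝ => exp (-2 * T)) atTop (𝓝 0) := by
    simpa using tendsto_rpow_mul_exp_neg_mul_atTop_nhds_zero 0 2 two_pos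
  have hφ : Tendsto (fun T => (exp (-2 * ((1 - μ T) * T)) + exp (-2 * T))⁻¹) atTop (𝓝 1) := by
    have hε : Tendsto (fun T => -2 * ((1 - μ T) * T)) atTop (𝓝 0) := by
      simpa using (tendsto_one_sub_mul_of_tanh_mul_eq_self hμ).const_mul (-2)
    simpa using (((continuous_exp.tendsto 0).comp hε).add hE).inv₀ (by simp)
  refine isEquivalent_iff_exists_eq_mul.2 ⟨_, hφ, ?_⟩
  filter_upwards [hμ] with T ⟨_, hfix⟩
  have hsplit : exp (-2 * ((1 - μ T) * T)) = exp (2 * (μ T * T)) * exp (-2 * T) := by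
    rw [← exp_add]; ring_nf
  have hfixed : 1 - μ T = 2 / (exp (2 * (μ T * T)) + 1) := by
    rw [← sub_sub_cancel 1 (2 / _), ← tanh_eq_one_sub, hfix]
  rw [Pi.mul_apply, hsplit, hfixed]
  have := exp_pos (-2 * T)
  field_simp

/-- For `T` large, `tanh(μT) = μ` has a unique solution `μ(T) ∈ (0,1)`, and
`μ(T) = 1 - 2e^{-2T} + o(e^{-2T})`, hence `-μ(T)² = -1 + 4e^{-2T} + o(e^{-2T})`. -/
theorem stmt5 :
    ∃ T₀ > (0:ℝ),
      (∀ T ≥ T₀, ∃! μ : ℝ, μ ∈ Ioo (0:ℝ) 1 ∧ Real.tanh (μ * T) = μ) ∧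
      ∀ μ : ℝ → ℝ, (∀ T ≥ T₀, μ T ∈ Ioo (0:ℝ) 1 ∧ Real.tanh (μ T * T) = μ T) →
        ((fun T => μ T - (1 - 2 * Real.exp (-2*T))) =o[atTop]
            fun T => Real.exp (-2*T)) ∧
        ((fun T => -(μ T)^2 - (-1 + 4 * Real.exp (-2*T))) =o[atTop]
            fun T => Real.exp (-2*T)) := by
  refine ⟨2, two_pos, fun T hT => existsUnique_tanh_mul_eq_self (by linarith), fun μ hμ => ?_⟩
  have hequiv := isEquivalent_one_sub_of_tanh_mul_eq_self
    (eventually_atTop.2 ⟨2, fun T hT => ⟨(hμ T hT).1.1, (hμ T hT).2⟩⟩)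
  have hE : Tendsto (fun T : ℝ => 2 * exp (-2 * T)) atTop (𝓝 0) := by
    simpa using (tendsto_rpow_mul_exp_neg_mul_atTop_nhds_zero 0 2 two_pos).const_mul 2
  have hsum : (fun T => 1 + μ T) ~[atTop] fun _ => 2 := by
    have h := (tendsto_const_nhds (x := (2 : ℝ))).sub (hequiv.symm.tendsto_nhds hE)
    rw [sub_zero] at h
    exact (isEquivalent_const_iff_tendsto two_ne_zero).2 (h.congr fun T => by ring)
  constructor
  · refine ((isLittleO_const_mul_right_iff two_ne_zero).1 hequiv.isLittleO.neg_left).congr_left ?_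
    intro T; simp only [Pi.sub_apply]; ring
  · have hprod : (fun T => (1 - μ T) * (1 + μ T) - 4 * exp (-2 * T)) =o[atTop]
        fun T => 4 * exp (-2 * T) := (hequiv.mul hsum).isLittleO.congr
      (fun T => by simp only [Pi.mul_apply, Pi.sub_apply]; ring)
      (fun T => by simp only [Pi.mul_apply]; ring)
    refine ((isLittleO_const_mul_right_iff four_ne_zero).1 hprod).congr_left fun T => ?_
    ring
end

section
/- Let f_ℓ, f_r be two linearly independent vectors in a real inner product space with ⟨f_α, f_α⟩ = 1 + O(ε²) and ⟨f_ℓ, f_r⟩ = O(ε), and let A be a symmetric operator with A f_α = μ f_α + r_α where ⟨r_α, f_α⟩ = O(ε²) and ⟨r_α, f_β⟩ = w_{αβ} for α ≠ β with w_{ℓr} = w_{rℓ} = O(ε). If 𝒢 = span{f_ℓ, f_r} is A-invariant, then the two eigenvalues λ₁ ≤ λ₂ of A restricted to 𝒢 satisfy λ₂ - λ₁ = 2|w_{ℓr}| + O(ε²). -/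
open Real Set
open scoped RealInnerProductSpace

set_option maxHeartbeats 2000000 in
/-- Abstract 2×2 interaction-matrix mechanism: if `f_ℓ, f_r` are quasi-orthonormal
(`⟨f_α,f_α⟩ = 1 + O(ε²)`, `⟨f_ℓ,f_r⟩ = O(ε)`) quasi-modes of a symmetric operator `A`
(`A f_α = μ f_α + r_α` with `⟨r_α,f_α⟩ = O(ε²)`, `⟨r_α,f_β⟩ = w = O(ε)` for `α ≠ β`),
and `𝒢 = span{f_ℓ,f_r}` is `A`-invariant, then the two eigenvalues `λ₁ ≤ λ₂` of `A`
restricted to `𝒢` satisfy `λ₂ - λ₁ = 2|w| + O(ε²)`. -/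
theorem stmt16 {E : Type*} [NormedAddCommGroup E] [InnerProductSpace ℝ E] :
    ∃ C > (0:ℝ), ∃ ε₀ > (0:ℝ), ∀ ε ∈ Ioo (0:ℝ) ε₀,
    ∀ (fl fr rl rr : E) (A : E →ₗ[ℝ] E) (μ w lam1 lam2 : ℝ),
      LinearIndependent ℝ ![fl, fr] →
      A.IsSymmetric →
      |⟪fl, fl⟫ - 1| ≤ ε^2 → |⟪fr, fr⟫ - 1| ≤ ε^2 →
      |⟪fl, fr⟫| ≤ ε →
      A fl = μ • fl + rl → A fr = μ • fr + rr →
      |⟪rl, fl⟫| ≤ ε^2 → |⟪rr, fr⟫| ≤ ε^2 →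
      ⟪rl, fr⟫ = w → ⟪rr, fl⟫ = w → |w| ≤ ε →
      (∀ x ∈ Submodule.span ℝ {fl, fr}, A x ∈ Submodule.span ℝ {fl, fr}) →
      (∃ v₁ ∈ Submodule.span ℝ {fl, fr}, v₁ ≠ 0 ∧ A v₁ = lam1 • v₁) →
      (∃ v₂ ∈ Submodule.span ℝ {fl, fr}, v₂ ≠ 0 ∧ A v₂ = lam2 • v₂ ∧
        ∀ v₁ ∈ Submodule.span ℝ {fl, fr}, A v₁ = lam1 • v₁ → ⟪v₁, v₂⟫ = 0) →
      lam1 ≤ lam2 →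
      |lam2 - lam1 - 2 * abs w| ≤ C * ε^2 := by
  refine ⟨100, by norm_num, 1/10, by norm_num, ?_⟩
  rintro ε ⟨hε0, hε1⟩ fl fr rl rr A μ w lam1 lam2 hind hsym hP hQ hS hAfl hAfr hU hV hwlr hwrl hw
    hinv ⟨v₁, hv₁mem, hv₁ne, hv₁eig⟩ ⟨v₂, hv₂mem, hv₂ne, hv₂eig, hv₂orth⟩ hle
  -- lam1 ≠ lam2
  have hne : lam1 ≠ lam2 := by
    intro h
    have h0 := hv₂orth v₂ hv₂mem (by rw [hv₂eig, h])
    exact hv₂ne (by simpa [real_inner_self_eq_norm_sq] using inner_self_eq_zero.mp h0)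
  have hpair := LinearIndependent.pair_iff.mp hind
  have hflmem : fl ∈ Submodule.span ℝ {fl, fr} := Submodule.subset_span (by simp)
  have hfrmem : fr ∈ Submodule.span ℝ {fl, fr} := Submodule.subset_span (by simp)
  -- rl, rr ∈ span
  have hrl : rl ∈ Submodule.span ℝ {fl, fr} := by
    have h1 := hinv fl hflmem
    rw [hAfl] at h1
    simpa using Submodule.sub_mem _ h1 (Submodule.smul_mem _ μ hflmem)
  have hrr : rr ∈ Submodule.span ℝ {fl, fr} := by
    have h1 := hinv fr hfrmem
    rw [hAfr] at h1
    simpa using Submodule.sub_mem _ h1 (Submodule.smul_mem _ μ hfrmem)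
  obtain ⟨a, b, hab⟩ := Submodule.mem_span_pair.mp hrl
  obtain ⟨c, d, hcd⟩ := Submodule.mem_span_pair.mp hrr
  obtain ⟨α, β, hv1⟩ := Submodule.mem_span_pair.mp hv₁mem
  obtain ⟨γ, δ, hv2⟩ := Submodule.mem_span_pair.mp hv₂mem
  -- inner product equations
  have eq1 : a * ⟪fl,fl⟫ + b * ⟪fl,fr⟫ = ⟪rl,fl⟫ := by
    rw [← hab]; simp [inner_add_left, real_inner_smul_left, real_inner_comm fr fl]
  have eq2 : a * ⟪fl,fr⟫ + b * ⟪fr,fr⟫ = w := by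
    rw [← hwlr, ← hab]; simp [inner_add_left, real_inner_smul_left]
  have eq3 : c * ⟪fl,fl⟫ + d * ⟪fl,fr⟫ = w := by
    rw [← hwrl, ← hcd]; simp [inner_add_left, real_inner_smul_left, real_inner_comm fr fl]
  have eq4 : c * ⟪fl,fr⟫ + d * ⟪fr,fr⟫ = ⟪rr,fr⟫ := by
    rw [← hcd]; simp [inner_add_left, real_inner_smul_left]
  -- eigen component equations
  have hcomp1 : a*α + c*β = (lam1 - μ)*α ∧ b*α + d*β = (lam1 - μ)*β := by
    have h1 : A v₁ = lam1 • v₁ := hv₁eig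
    rw [← hv1, map_add, map_smul, map_smul, hAfl, hAfr, ← hab, ← hcd] at h1
    have h0 : (a*α + c*β - (lam1 - μ)*α) • fl + (b*α + d*β - (lam1 - μ)*β) • fr = 0 := by
      linear_combination (norm := module) h1
    have h2 := hpair _ _ h0
    constructor <;> linarith [h2.1, h2.2]
  have hcomp2 : a*γ + c*δ = (lam2 - μ)*γ ∧ b*γ + d*δ = (lam2 - μ)*δ := by
    have h1 : A v₂ = lam2 • v₂ := hv₂eig
    rw [← hv2, map_add, map_smul, map_smul, hAfl, hAfr, ← hab, ← hcd] at h1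
    have h0 : (a*γ + c*δ - (lam2 - μ)*γ) • fl + (b*γ + d*δ - (lam2 - μ)*δ) • fr = 0 := by
      linear_combination (norm := module) h1
    have h2 := hpair _ _ h0
    constructor <;> linarith [h2.1, h2.2]
  -- nonzero coefficient vectors
  have hαβ : α ≠ 0 ∨ β ≠ 0 := by
    by_contra h
    push_neg at h
    exact hv₁ne (by rw [← hv1, h.1, h.2]; simp)
  have hγδ : γ ≠ 0 ∨ δ ≠ 0 := by
    by_contra h
    push_neg at h
    exact hv₂ne (by rw [← hv2, h.1, h.2]; simp)
  -- characteristic polynomial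
  have hchar : ∀ t x y : ℝ, (x ≠ 0 ∨ y ≠ 0) → a*x + c*y = t*x → b*x + d*y = t*y →
      t^2 - (a+d)*t + (a*d - b*c) = 0 := by
    intro t x y hxy h1 h2
    rcases hxy with hx | hy
    · have h3 : (t^2 - (a+d)*t + (a*d - b*c)) * x = 0 := by linear_combination (d - t)*h1 - c*h2
      exact (mul_eq_zero.mp h3).resolve_right hx
    · have h3 : (t^2 - (a+d)*t + (a*d - b*c)) * y = 0 := by linear_combination (-b)*h1 + (a - t)*h2
      exact (mul_eq_zero.mp h3).resolve_right hy
  have ht1 := hchar (lam1 - μ) α β hαβ hcomp1.1 hcomp1.2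
  have ht2 := hchar (lam2 - μ) γ δ hγδ hcomp2.1 hcomp2.2
  -- Vieta
  have hsum : (lam1 - μ) + (lam2 - μ) = a + d := by
    have h3 : ((lam1 - μ) - (lam2 - μ)) * ((lam1 - μ) + (lam2 - μ) - (a + d)) = 0 := by
      linear_combination ht1 - ht2
    have h4 : (lam1 - μ) - (lam2 - μ) ≠ 0 := fun h => hne (by linarith)
    have := (mul_eq_zero.mp h3).resolve_left h4
    linarith
  have hprod : (lam1 - μ)*(lam2 - μ) = a*d - b*c := by
    linear_combination (lam1 - μ)*hsum - ht1
  have hsq : (lam2 - lam1)^2 = (a - d)^2 + 4*(b*c) := by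
    linear_combination (lam1 + lam2 - 2*μ + a + d)*hsum - 4*hprod
  -- quantitative bounds
  rw [abs_le] at hP hQ hS hU hV hw
  clear hchar ht1 ht2 hsum hprod hcomp1 hcomp2 hv1 hv2 hαβ hγδ hv₁eig hv₂eig hv₂orth
    hinv hrl hrr hab hcd hAfl hAfr hpair hind hsym hwlr hwrl hv₁mem hv₂mem hv₁ne hv₂ne
  set P := (⟪fl,fl⟫ : ℝ) with hPdef
  set Q := (⟪fr,fr⟫ : ℝ) with hQdef
  set S := (⟪fl,fr⟫ : ℝ) with hSdef
  set U := (⟪rl,fl⟫ : ℝ) with hUdef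
  set V := (⟪rr,fr⟫ : ℝ) with hVdef
  clear_value P Q S U V
  clear hPdef hQdef hSdef hUdef hVdef hflmem hfrmem fl fr rl rr A v₁ v₂
  have hε2 : ε^2 ≤ 1/100 := by nlinarith
  have hΔ : (9:ℝ)/10 ≤ P*Q - S*S := by
    nlinarith [hP.1, hP.2, hQ.1, hQ.2, hS.1, hS.2, hε2, sq_nonneg (P-Q), sq_nonneg (P+Q-2),
      sq_nonneg S, sq_nonneg ε]
  have habs : ∀ z R K : ℝ, z * (P*Q - S*S) = R → |R| ≤ K → |z| ≤ 2*K := by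
    intro z R K hzR hRK
    rw [abs_le] at hRK ⊢
    have hK : 0 ≤ K := le_trans (abs_nonneg R) (abs_le.mpr hRK)
    constructor
    · rcases le_or_gt 0 z with hz | hz
      · linarith
      · have h := mul_le_mul_of_nonpos_left hΔ hz.le
        linarith
    · rcases le_or_gt z 0 with hz | hz
      · linarith
      · have h := mul_le_mul_of_nonneg_left hΔ hz.le
        linarith
  have haΔ : a * (P*Q - S*S) = U*Q - w*S := by linear_combination Q*eq1 - S*eq2
  have hdΔ : d * (P*Q - S*S) = V*P - w*S := by linear_combination P*eq4 - S*eq3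
  have hbΔ : (b - w) * (P*Q - S*S) = w*(P - (P*Q - S*S)) - U*S := by
    linear_combination P*eq2 - S*eq1
  have hcΔ : (c - w) * (P*Q - S*S) = w*(Q - (P*Q - S*S)) - V*S := by
    linear_combination Q*eq3 - S*eq4
  have haR : |U*Q - w*S| ≤ 3*ε^2 := by
    rw [abs_le]
    constructor <;>
      nlinarith [hU.1, hU.2, hQ.1, hQ.2, hw.1, hw.2, hS.1, hS.2, hε2, hε0.le, sq_nonneg ε]
  have hdR : |V*P - w*S| ≤ 3*ε^2 := by
    rw [abs_le]
    constructor <;>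
      nlinarith [hV.1, hV.2, hP.1, hP.2, hw.1, hw.2, hS.1, hS.2, hε2, hε0.le, sq_nonneg ε]
  have hPQS : |P - (P*Q - S*S)| ≤ 3*ε^2 := by
    rw [abs_le]
    constructor <;>
      nlinarith [hP.1, hP.2, hQ.1, hQ.2, hS.1, hS.2, hε2, hε0.le, sq_nonneg ε]
  have hQPS : |Q - (P*Q - S*S)| ≤ 3*ε^2 := by
    rw [abs_le]
    constructor <;>
      nlinarith [hP.1, hP.2, hQ.1, hQ.2, hS.1, hS.2, hε2, hε0.le, sq_nonneg ε]
  have hbR : |w*(P - (P*Q - S*S)) - U*S| ≤ 4*ε^3 := by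
    have h1 : |w*(P - (P*Q - S*S)) - U*S| ≤ |w| * |P - (P*Q - S*S)| + |U| * |S| := by
      calc |w*(P - (P*Q - S*S)) - U*S| ≤ |w*(P - (P*Q - S*S))| + |U*S| := abs_sub _ _
        _ = |w| * |P - (P*Q - S*S)| + |U| * |S| := by rw [abs_mul, abs_mul]
    have h2 : |w| * |P - (P*Q - S*S)| + |U| * |S| ≤ ε*(3*ε^2) + ε^2*ε :=
      add_le_add (mul_le_mul (abs_le.mpr hw) hPQS (abs_nonneg _) hε0.le)
        (mul_le_mul (abs_le.mpr hU) (abs_le.mpr hS) (abs_nonneg _) (by positivity))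
    calc |w*(P - (P*Q - S*S)) - U*S| ≤ ε*(3*ε^2) + ε^2*ε := h1.trans h2
      _ = 4*ε^3 := by ring
  have hcR : |w*(Q - (P*Q - S*S)) - V*S| ≤ 4*ε^3 := by
    have h1 : |w*(Q - (P*Q - S*S)) - V*S| ≤ |w| * |Q - (P*Q - S*S)| + |V| * |S| := by
      calc |w*(Q - (P*Q - S*S)) - V*S| ≤ |w*(Q - (P*Q - S*S))| + |V*S| := abs_sub _ _
        _ = |w| * |Q - (P*Q - S*S)| + |V| * |S| := by rw [abs_mul, abs_mul]
    have h2 : |w| * |Q - (P*Q - S*S)| + |V| * |S| ≤ ε*(3*ε^2) + ε^2*ε :=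
      add_le_add (mul_le_mul (abs_le.mpr hw) hQPS (abs_nonneg _) hε0.le)
        (mul_le_mul (abs_le.mpr hV) (abs_le.mpr hS) (abs_nonneg _) (by positivity))
    calc |w*(Q - (P*Q - S*S)) - V*S| ≤ ε*(3*ε^2) + ε^2*ε := h1.trans h2
      _ = 4*ε^3 := by ring
  have ha : |a| ≤ 6*ε^2 := by
    have := habs a _ _ haΔ haR; linarith [this]
  have hd : |d| ≤ 6*ε^2 := by
    have := habs d _ _ hdΔ hdR; linarith [this]
  have hb : |b - w| ≤ 8*ε^3 := by
    have := habs (b - w) _ _ hbΔ hbR; linarith [this]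
  have hc : |c - w| ≤ 8*ε^3 := by
    have := habs (c - w) _ _ hcΔ hcR; linarith [this]
  have habsw : |w| ≤ ε := abs_le.mpr hw
  have had : |a - d| ≤ 12*ε^2 := (abs_sub a d).trans (by linarith)
  have habd : (a - d)^2 ≤ 144*ε^4 := by
    have h := mul_le_mul had had (abs_nonneg _) (by positivity)
    calc (a-d)^2 = |a-d| * |a-d| := by rw [sq]; exact (abs_mul_abs_self _).symm
      _ ≤ (12*ε^2)*(12*ε^2) := h
      _ = 144*ε^4 := by ring
  have hcabs : |c| ≤ 2*ε := by
    have h := abs_sub_abs_le_abs_sub c w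
    nlinarith [hc, habsw, hε2, hε0.le, abs_nonneg w]
  have hbc : |b*c - w^2| ≤ 24*ε^4 := by
    have h0 : |b*c - w^2| ≤ |b - w| * |c| + |w| * |c - w| := by
      calc |b*c - w^2| = |(b-w)*c + w*(c-w)| := by ring_nf
        _ ≤ |(b-w)*c| + |w*(c-w)| := abs_add_le _ _
        _ = |b - w| * |c| + |w| * |c - w| := by rw [abs_mul, abs_mul]
    have h1 : |b - w| * |c| + |w| * |c - w| ≤ (8*ε^3)*(2*ε) + ε*(8*ε^3) :=
      add_le_add (mul_le_mul hb hcabs (abs_nonneg _) (by positivity))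
        (mul_le_mul habsw hc (abs_nonneg _) hε0.le)
    calc |b*c - w^2| ≤ (8*ε^3)*(2*ε) + ε*(8*ε^3) := h0.trans h1
      _ = 24*ε^4 := by ring
  rw [abs_le] at hbc
  have key1 : (lam2 - lam1)^2 - 4*w^2 ≤ 400*ε^4 := by rw [hsq]; linarith
  have key2 : -(400*ε^4) ≤ (lam2 - lam1)^2 - 4*w^2 := by
    rw [hsq]; linarith [hbc.1, sq_nonneg (a-d)]
  have hx : (0:ℝ) ≤ lam2 - lam1 := by linarith
  have hy : (0:ℝ) ≤ 2 * abs w := by positivity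
  have hyw : (2 * abs w)^2 = 4*w^2 := by rw [mul_pow, sq_abs]; ring
  have key1' : (lam2 - lam1)^2 - (2 * abs w)^2 ≤ 400*ε^4 := by rw [hyw]; exact key1
  have key2' : -(400*ε^4) ≤ (lam2 - lam1)^2 - (2 * abs w)^2 := by rw [hyw]; exact key2
  clear key1 key2 hyw hsq habd hbc had hcabs habsw hb hc ha hd haR hdR hbR hcR hPQS hQPS
    haΔ hbΔ hcΔ hdΔ habs hΔ eq1 eq2 eq3 eq4 hP hQ hS hU hV hw
  have hstep : |lam2 - lam1 - 2 * abs w| ≤ 20*ε^2 := by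
    rw [abs_le]
    constructor
    · nlinarith [key2', add_nonneg hx hy, sq_nonneg ε, hx, hy]
    · nlinarith [key1', add_nonneg hx hy, sq_nonneg ε, hx, hy]
  calc |lam2 - lam1 - 2 * abs w| ≤ 20*ε^2 := hstep
    _ ≤ 100*ε^2 := by nlinarith
end
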